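/- In every single-item first-price auction with valuations v_1, …, v_n ≥ 0 and any tie-breaking rule, every mixed Nash equilibrium B is fully efficient: E_{b∼B}[SW(b)] = max_i v_i. That is, the price of anarchy of mixed Nash equilibria in single-item first-price auctions is 1. -/

import Mathlib

/-!
Let `U i` be the equilibrium payoff of bidder `i`, and fix bidders `i`, `j` with `v j < v i`;
we show that `j` wins with probability zero.
Overbidding one's value is never a best response, so `j` can only win with bids `≤ v j`.
Bidding just above `x < v i`, bidder `i` wins whenever all rivals bid at most `x`, so
`(v i - x) * P(rivals of i bid ≤ x) ≤ U i`. If `U i = 0`, the rivals of `i` almost never all bid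
`≤ v j`, which every win of `j` at a bid `≤ v j` requires. If `U i > 0`, almost every bid of `i`
is a best response, which forces `i` to win all its ties; so `j` only wins by strictly outbidding
`i`, hence above the lowest bid `x₁ = essInf id (B i)` of `i`. If `x₁ ≥ v j` these wins are
overbids. If `x₁ < v j`, the bids of `i` near `x₁` show that with positive probability all rivals
of `i` bid `≤ x₁`; then `j` bids `≤ x₁` with positive probability and never wins there, so
`U j = 0`, while bidding between `x₁` and `v j` gives `j` a positive payoff.
-/

open MeasureTheory Set Function Filter ProbabilityTheory Topology

section ProductSlices

variable {ι : Type*} [DecidableEq ι] {α : ι → Type*} [∀ i, MeasurableSpace (α i)]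

theorem measurable_update_prod (i : ι) :
    Measurable fun p : α i × (∀ k, α k) => update p.2 i p.1 :=
  measurable_update'.comp measurable_swap

variable [Fintype ι] {μ : ∀ i, Measure (α i)} [∀ i, IsProbabilityMeasure (μ i)]
  {E : Type*} [NormedAddCommGroup E]

theorem measurePreserving_update (i : ι) :
    MeasurePreserving (fun p : α i × (∀ k, α k) => update p.2 i p.1)
      ((μ i).prod (Measure.pi μ)) (Measure.pi μ) := by
  refine ⟨measurable_update_prod i, (Measure.pi_eq fun s hs => ?_).symm⟩
  have hpre : (fun p : α i × (∀ k, α k) => update p.2 i p.1) ⁻¹' univ.pi s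
      = s i ×ˢ univ.pi (update s i univ) := by
    ext ⟨x, b⟩
    simp only [mem_preimage, Set.mem_pi, mem_univ, forall_const, mem_prod]
    refine ⟨fun h => ⟨by simpa using h i, fun k => ?_⟩, fun ⟨hx, hb⟩ k => ?_⟩
    · rcases eq_or_ne k i with rfl | hk
      · simp
      · simpa [hk] using h k
    · rcases eq_or_ne k i with rfl | hk
      · simpa using hx
      · simpa [hk] using hb k
  rw [Measure.map_apply (measurable_update_prod i) (.univ_pi hs), hpre, Measure.prod_prod,
    Measure.pi_pi, ← Finset.mul_prod_erase _ _ (Finset.mem_univ i),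
    ← Finset.mul_prod_erase _ _ (Finset.mem_univ i)]
  simp only [update_self, measure_univ, one_mul]
  congr 1
  exact Finset.prod_congr rfl fun k hk => by rw [update_of_ne (Finset.ne_of_mem_erase hk)]

theorem MeasureTheory.Integrable.comp_update_prod {f : (∀ k, α k) → E}
    (hf : Integrable f (Measure.pi μ)) (i : ι) :
    Integrable (fun p : α i × (∀ k, α k) => f (update p.2 i p.1)) ((μ i).prod (Measure.pi μ)) :=
  ((measurePreserving_update i).integrable_comp hf.aestronglyMeasurable).2 hf

variable [NormedSpace ℝ E]

theorem integrable_integral_update {f : (∀ k, α k) → E} (hf : Integrable f (Measure.pi μ))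
    (i : ι) : Integrable (fun x => ∫ b, f (update b i x) ∂Measure.pi μ) (μ i) :=
  (hf.comp_update_prod i).integral_prod_left

theorem integral_eq_integral_integral_update {f : (∀ k, α k) → E}
    (hf : Integrable f (Measure.pi μ)) (i : ι) :
    ∫ b, f b ∂Measure.pi μ = ∫ x, ∫ b, f (update b i x) ∂Measure.pi μ ∂μ i := by
  have hf' := hf.aestronglyMeasurable
  rw [← (measurePreserving_update (μ := μ) i).map_eq] at hf'
  conv_lhs => rw [← (measurePreserving_update (μ := μ) i).map_eq,
    integral_map (measurable_update_prod i).aemeasurable hf']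
  exact integral_prod _ (hf.comp_update_prod i)

theorem ae_ae_update_of_ae {p : (∀ k, α k) → Prop} (h : ∀ᵐ b ∂Measure.pi μ, p b) (i : ι) :
    ∀ᵐ x ∂μ i, ∀ᵐ b ∂Measure.pi μ, p (update b i x) :=
  Measure.ae_ae_of_ae_prod ((measurePreserving_update i).quasiMeasurePreserving.ae h)

theorem ae_of_ae_ae_update {p : (∀ k, α k) → Prop} (hp : MeasurableSet {b | p b}) (i : ι)
    (h : ∀ᵐ x ∂μ i, ∀ᵐ b ∂Measure.pi μ, p (update b i x)) : ∀ᵐ b ∂Measure.pi μ, p b := by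
  rw [← (measurePreserving_update (μ := μ) i).map_eq,
    ae_map_iff (measurable_update_prod i).aemeasurable hp]
  exact (Measure.ae_prod_iff_ae_ae (measurable_update_prod i hp)).2 h

theorem measure_eval_preimage_inter (i : ι) {s : Set (α i)} {t : Set (∀ k, α k)}
    (hs : MeasurableSet s) (ht : MeasurableSet t) (hti : ∀ b x, update b i x ∈ t ↔ b ∈ t) :
    Measure.pi μ (eval i ⁻¹' s ∩ t) = μ i s * Measure.pi μ t := by
  have hpre : (fun p : α i × (∀ k, α k) => update p.2 i p.1) ⁻¹' (eval i ⁻¹' s ∩ t)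
      = s ×ˢ t := by
    ext ⟨x, b⟩
    simp [hti]
  rw [← (measurePreserving_update i).measure_preimage
    ((measurable_pi_apply i hs).inter ht).nullMeasurableSet, hpre, Measure.prod_prod]

end ProductSlices

section LowestBid

variable {ν : Measure ℝ}

theorem ae_essInf_id_le (h : ∀ᵐ x ∂ν, 0 ≤ x) : ∀ᵐ x ∂ν, essInf id ν ≤ x :=
  ae_essInf_le (isBoundedUnder_of_eventually_ge h)

theorem measure_Iio_pos_of_essInf_id_lt [IsProbabilityMeasure ν] {z : ℝ} (hz : essInf id ν < z) :
    0 < ν (Iio z) := by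
  obtain ⟨a, ha⟩ := ((tendsto_measure_Iic_atTop ν).eventually
    (lt_mem_nhds (show (0 : ENNReal) < ν univ by simp))).exists
  refine pos_iff_ne_zero.2 fun hzero => hz.not_ge (le_essInf_of_ae_le z ?_ ?_)
  · exact (measure_eq_zero_iff_ae_notMem.1 hzero).mono fun x hx => not_lt.1 hx
  · exact IsCoboundedUnder.of_frequently_le (a := a) (frequently_ae_iff.2 ha.ne')

theorem le_measureReal_Iic_of_forall_lt [IsProbabilityMeasure ν] {c x : ℝ}
    (h : ∀ y, x < y → c ≤ ν.real (Iic y)) : c ≤ ν.real (Iic x) := by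
  have hcont : Tendsto (cdf ν) (𝓝[>] x) (𝓝 (cdf ν x)) :=
    continuousWithinAt_Ioi_iff_Ici.2 ((cdf ν).right_continuous x)
  rw [cdf_eq_real] at hcont
  exact ge_of_tendsto hcont
    (eventually_nhdsWithin_of_forall fun y hy => (cdf_eq_real ν y).symm ▸ h y hy)

end LowestBid

namespace FirstPriceAuction

variable {n : ℕ}

structure IsTieBreakingRule (τ : (Fin n → ℝ) → Fin n → ℝ) : Prop where
  measurable : ∀ i, Measurable fun b => τ b i
  nonneg : ∀ b i, 0 ≤ τ b i
  sum_eq_one : ∀ b, ∑ i, τ b i = 1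
  eq_zero_of_lt : ∀ b i, (∃ k, b i < b k) → τ b i = 0

namespace IsTieBreakingRule

variable {τ : (Fin n → ℝ) → Fin n → ℝ}

theorem le_one (hτ : IsTieBreakingRule τ) (b : Fin n → ℝ) (i : Fin n) : τ b i ≤ 1 :=
  hτ.sum_eq_one b ▸ Finset.single_le_sum (fun k _ => hτ.nonneg b k) (Finset.mem_univ i)

theorem le_of_ne_zero (hτ : IsTieBreakingRule τ) {b : Fin n → ℝ} {i : Fin n} (h : τ b i ≠ 0)
    (k : Fin n) : b k ≤ b i :=
  not_lt.1 fun hlt => h (hτ.eq_zero_of_lt b i ⟨k, hlt⟩)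

theorem eq_one_of_forall_lt (hτ : IsTieBreakingRule τ) {b : Fin n → ℝ} {i : Fin n}
    (h : ∀ k ≠ i, b k < b i) : τ b i = 1 := by
  rw [← hτ.sum_eq_one b, Finset.sum_eq_single i
    (fun k _ hk => hτ.eq_zero_of_lt b k ⟨i, h k hk⟩) (by simp)]

theorem eq_zero_of_eq_one (hτ : IsTieBreakingRule τ) {b : Fin n → ℝ} {i j : Fin n} (hji : j ≠ i)
    (h : τ b i = 1) : τ b j = 0 := by
  have := Finset.add_le_sum (fun k _ => hτ.nonneg b k) (Finset.mem_univ i) (Finset.mem_univ j)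
    hji.symm
  linarith [hτ.sum_eq_one b, hτ.nonneg b j]

theorem apply_update_le_indicator (hτ : IsTieBreakingRule τ) {i : Fin n} {x : ℝ}
    (b : Fin n → ℝ) : τ (update b i x) i ≤ {b | ∀ k ≠ i, b k ≤ x}.indicator 1 b := by
  by_cases hb : b ∈ {b | ∀ k ≠ i, b k ≤ x}
  · rw [indicator_of_mem hb, Pi.one_apply]
    exact hτ.le_one _ i
  · obtain ⟨k, hk, hxk⟩ : ∃ k ≠ i, x < b k := by simpa using hb
    rw [indicator_of_notMem hb, hτ.eq_zero_of_lt _ i ⟨k, by simpa [update_of_ne hk] using hxk⟩]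

theorem integrable_comp (hτ : IsTieBreakingRule τ) {X : Type*} [MeasurableSpace X]
    {μ : Measure X} [IsFiniteMeasure μ] {f : X → Fin n → ℝ} (hf : Measurable f) (i : Fin n) :
    Integrable (fun a => τ (f a) i) μ :=
  .of_bound ((hτ.measurable i).comp hf).aestronglyMeasurable 1 <| ae_of_all _ fun a => by
    rw [Real.norm_of_nonneg (hτ.nonneg _ i)]
    exact hτ.le_one _ i

end IsTieBreakingRule

noncomputable def winProb (B : Fin n → Measure ℝ) (τ : (Fin n → ℝ) → Fin n → ℝ) (i : Fin n)
    (x : ℝ) : ℝ :=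
  ∫ b, τ (update b i x) i ∂Measure.pi B

section WinProb

variable {B : Fin n → Measure ℝ} {τ : (Fin n → ℝ) → Fin n → ℝ} {i : Fin n} {x : ℝ}

theorem winProb_nonneg (hτ : IsTieBreakingRule τ) : 0 ≤ winProb B τ i x :=
  integral_nonneg fun _ => hτ.nonneg _ i

variable [∀ i, IsProbabilityMeasure (B i)]

theorem winProb_eq_zero_iff (hτ : IsTieBreakingRule τ) :
    winProb B τ i x = 0 ↔ ∀ᵐ b ∂Measure.pi B, τ (update b i x) i = 0 :=
  integral_eq_zero_iff_of_nonneg (fun _ => hτ.nonneg _ i) 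
    (hτ.integrable_comp measurable_update_left i)

theorem measureReal_lt_le_winProb (hτ : IsTieBreakingRule τ) :
    (Measure.pi B).real {b | ∀ k ≠ i, b k < x} ≤ winProb B τ i x := by
  rw [← integral_indicator_one (by measurability)]
  refine integral_mono ((integrable_const 1).indicator (by measurability))
    (hτ.integrable_comp measurable_update_left i) fun b => ?_
  by_cases hb : b ∈ {b | ∀ k ≠ i, b k < x}
  · rw [indicator_of_mem hb, Pi.one_apply, hτ.eq_one_of_forall_lt fun k hk => ?_]
    simpa [update_of_ne hk] using hb k hk
  · rw [indicator_of_notMem hb]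
    exact hτ.nonneg _ i

theorem winProb_le_measureReal_le (hτ : IsTieBreakingRule τ) :
    winProb B τ i x ≤ (Measure.pi B).real {b | ∀ k ≠ i, b k ≤ x} := by
  rw [← integral_indicator_one (by measurability)]
  exact integral_mono (hτ.integrable_comp measurable_update_left i)
    ((integrable_const 1).indicator (by measurability)) hτ.apply_update_le_indicator

theorem ae_eq_one_of_winProb_eq (hτ : IsTieBreakingRule τ)
    (h : winProb B τ i x = (Measure.pi B).real {b | ∀ k ≠ i, b k ≤ x}) :
    ∀ᵐ b ∂Measure.pi B, (∀ k ≠ i, b k ≤ x) → τ (update b i x) i = 1 := by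
  have hE : MeasurableSet {b : Fin n → ℝ | ∀ k ≠ i, b k ≤ x} := by measurability
  rw [← integral_indicator_one hE, winProb] at h
  have hae := (integral_eq_iff_of_ae_le (hτ.integrable_comp measurable_update_left i)
    ((integrable_const 1).indicator hE) (ae_of_all _ hτ.apply_update_le_indicator)).1 h
  filter_upwards [hae] with b hb hbE
  rw [hb, indicator_of_mem (show b ∈ {b | ∀ k ≠ i, b k ≤ x} from hbE), Pi.one_apply]

end WinProb

structure IsEquilibrium (B : Fin n → Measure ℝ) (τ : (Fin n → ℝ) → Fin n → ℝ)
    (v U : Fin n → ℝ) : Prop where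
  payoff_le : ∀ i x, 0 ≤ x → (v i - x) * winProb B τ i x ≤ U i
  ae_payoff_eq : ∀ i, ∀ᵐ x ∂B i, 0 ≤ x ∧ (v i - x) * winProb B τ i x = U i

namespace IsEquilibrium

variable {B : Fin n → Measure ℝ} {τ : (Fin n → ℝ) → Fin n → ℝ} {v U : Fin n → ℝ} {i j : Fin n}

theorem payoff_nonneg (hE : IsEquilibrium B τ v U) (hτ : IsTieBreakingRule τ) (hv : 0 ≤ v i) :
    0 ≤ U i :=
  (mul_nonneg (by simpa using hv) (winProb_nonneg hτ)).trans (hE.payoff_le i 0 le_rfl)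

variable [∀ i, IsProbabilityMeasure (B i)]

theorem ae_essInf_le_bid (hE : IsEquilibrium B τ v U) :
    ∀ᵐ b ∂Measure.pi B, essInf id (B i) ≤ b i :=
  (measurePreserving_eval B i).quasiMeasurePreserving.ae
    (ae_essInf_id_le ((hE.ae_payoff_eq i).mono fun _ h => h.1))

theorem ae_eq_zero_of_value_lt_bid (hE : IsEquilibrium B τ v U) (hτ : IsTieBreakingRule τ)
    (hv : 0 ≤ v j) : ∀ᵐ b ∂Measure.pi B, v j < b j → τ b j = 0 := by
  have hτm := hτ.measurable
  refine ae_of_ae_ae_update (by measurability) j ?_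
  filter_upwards [hE.ae_payoff_eq j] with y ⟨_, hy⟩
  by_cases hvy : v j < y
  · have hw : winProb B τ j y = 0 := le_antisymm (by
      nlinarith [hE.payoff_nonneg hτ hv, winProb_nonneg (B := B) (i := j) (x := y) hτ])
      (winProb_nonneg hτ)
    filter_upwards [(winProb_eq_zero_iff hτ).1 hw] with b hb _ using hb
  · exact ae_of_all _ fun b hb => absurd (by simpa using hb) hvy

theorem payoff_ge_of_lt_value (hE : IsEquilibrium B τ v U) (hτ : IsTieBreakingRule τ) {x : ℝ}
    (hx : 0 ≤ x) (hxv : x < v i) :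
    (v i - x) * (Measure.pi B).real {b | ∀ k ≠ i, b k ≤ x} ≤ U i := by
  set G := (Measure.pi B).real {b | ∀ k ≠ i, b k ≤ x}
  have hε : ∀ ε ∈ Ioo 0 (v i - x), (v i - x - ε) * G ≤ U i := fun ε ⟨hε, hεv⟩ => calc
    (v i - x - ε) * G ≤ (v i - (x + ε)) * winProb B τ i (x + ε) := by
      rw [sub_sub]
      refine mul_le_mul_of_nonneg_left ?_ (by linarith)
      refine le_trans (measureReal_mono (s₂ := {b | ∀ k ≠ i, b k < x + ε})
        fun b hb k hk => (hb k hk).trans_lt (by linarith)) (measureReal_lt_le_winProb hτ)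
    _ ≤ U i := hE.payoff_le i _ (by linarith)
  have hlim : Tendsto (fun ε => (v i - x - ε) * G) (𝓝[>] 0) (𝓝 ((v i - x - 0) * G)) :=
    ((continuous_const.sub continuous_id).mul continuous_const).continuousAt.tendsto.mono_left
      nhdsWithin_le_nhds
  simpa using le_of_tendsto hlim (eventually_of_mem (Ioo_mem_nhdsGT (by linarith)) hε)

theorem payoff_pos (hE : IsEquilibrium B τ v U) (hτ : IsTieBreakingRule τ) {y : ℝ} (hy : 0 ≤ y)
    (hyv : y < v j) (h : Measure.pi B {b | ∀ k ≠ j, b k < y} ≠ 0) : 0 < U j := by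
  have hpos : 0 < (Measure.pi B).real {b | ∀ k ≠ j, b k < y} :=
    ENNReal.toReal_pos h (measure_ne_top _ _)
  exact (mul_pos (sub_pos.2 hyv) (hpos.trans_le (measureReal_lt_le_winProb hτ))).trans_le
    (hE.payoff_le j y hy)

theorem ae_winProb_eq (hE : IsEquilibrium B τ v U) (hτ : IsTieBreakingRule τ) (hU : 0 < U i) :
    ∀ᵐ x ∂B i, 0 ≤ x ∧ winProb B τ i x = (Measure.pi B).real {b | ∀ k ≠ i, b k ≤ x} ∧
      U i ≤ v i * (Measure.pi B).real {b | ∀ k ≠ i, b k ≤ x} := by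
  filter_upwards [hE.ae_payoff_eq i] with x ⟨hx, hxU⟩
  have hw := winProb_nonneg (B := B) (i := i) (x := x) hτ
  have hwG := winProb_le_measureReal_le (B := B) (i := i) (x := x) hτ
  have hxv : x < v i := by
    by_contra! h
    nlinarith
  have hGw := hE.payoff_ge_of_lt_value hτ hx hxv
  refine ⟨hx, le_antisymm hwG ?_, ?_⟩
  · nlinarith
  · nlinarith [measureReal_nonneg (μ := Measure.pi B) (s := {b | ∀ k ≠ i, b k ≤ x})]

theorem ae_eq_one_of_forall_le (hE : IsEquilibrium B τ v U) (hτ : IsTieBreakingRule τ)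
    (hU : 0 < U i) : ∀ᵐ b ∂Measure.pi B, (∀ k, b k ≤ b i) → τ b i = 1 := by
  have hτm := hτ.measurable
  refine ae_of_ae_ae_update (by measurability) i ?_
  filter_upwards [hE.ae_winProb_eq hτ hU] with x ⟨_, hw, _⟩
  filter_upwards [ae_eq_one_of_winProb_eq hτ hw] with b hb hmax
  exact hb fun k hk => by simpa [update_of_ne hk] using hmax k

theorem ae_lt_of_ne_zero (hE : IsEquilibrium B τ v U) (hτ : IsTieBreakingRule τ) (hU : 0 < U i)
    (hji : j ≠ i) : ∀ᵐ b ∂Measure.pi B, τ b j ≠ 0 → b i < b j := by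
  filter_upwards [hE.ae_eq_one_of_forall_le hτ hU] with b hb hj
  by_contra! hle
  exact hj (hτ.eq_zero_of_eq_one hji (hb fun k => (hτ.le_of_ne_zero hj k).trans hle))

theorem exists_bid_lt_of_essInf_lt (hE : IsEquilibrium B τ v U) (hτ : IsTieBreakingRule τ)
    (hU : 0 < U i) {y : ℝ} (hy : essInf id (B i) < y) :
    ∃ x < y, 0 ≤ x ∧ U i ≤ v i * (Measure.pi B).real {b | ∀ k ≠ i, b k ≤ x} :=
  ((frequently_ae_iff.2 (measure_Iio_pos_of_essInf_id_lt hy).ne').and_eventually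
    (hE.ae_winProb_eq hτ hU)).exists.imp fun _ ⟨hxy, hx, _, hxU⟩ => ⟨hxy, hx, hxU⟩

theorem payoff_pos_of_essInf_lt (hE : IsEquilibrium B τ v U) (hτ : IsTieBreakingRule τ)
    (hU : 0 < U i) (hji : j ≠ i) (hlow : essInf id (B i) < v j) : 0 < U j := by
  obtain ⟨y, hy₁, hy₂⟩ := exists_between hlow
  obtain ⟨x, hxy, hx, hxU⟩ := hE.exists_bid_lt_of_essInf_lt hτ hU hy₁
  have hG : Measure.pi B {b | ∀ k ≠ i, b k ≤ x} ≠ 0 := by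
    refine (measureReal_ne_zero_iff).1 fun h0 => ?_
    rw [h0, mul_zero] at hxU
    linarith
  refine hE.payoff_pos hτ (hx.trans hxy.le) hy₂ (ne_of_gt ?_)
  have hsub : eval i ⁻¹' Iio y ∩ {b | ∀ k ≠ i, b k ≤ x} ⊆ {b | ∀ k ≠ j, b k < y} :=
    fun b ⟨hbi, hb⟩ k _ => by
      rcases eq_or_ne k i with rfl | hki
      · exact hbi
      · exact (hb k hki).trans_lt hxy
  refine lt_of_lt_of_le ?_ (measure_mono hsub)
  rw [measure_eval_preimage_inter (t := {b | ∀ k ≠ i, b k ≤ x}) i measurableSet_Iio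
    (by measurability) fun b z => forall₂_congr fun k hk => by rw [update_of_ne hk]]
  exact ENNReal.mul_pos (measure_Iio_pos_of_essInf_id_lt hy₁).ne' hG

theorem measure_Iic_essInf_ne_zero (hE : IsEquilibrium B τ v U) (hτ : IsTieBreakingRule τ)
    (hU : 0 < U i) (hji : j ≠ i) : B j (Iic (essInf id (B i))) ≠ 0 := by
  have hvi : 0 < v i := by
    obtain ⟨x, -, -, hxU⟩ := hE.exists_bid_lt_of_essInf_lt hτ hU (lt_add_one (essInf id (B i)))
    nlinarith [measureReal_nonneg (μ := Measure.pi B) (s := {b | ∀ k ≠ i, b k ≤ x})]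
  have hc : U i / v i ≤ (B j).real (Iic (essInf id (B i))) :=
    le_measureReal_Iic_of_forall_lt fun y hy => by
      obtain ⟨x, hxy, -, hxU⟩ := hE.exists_bid_lt_of_essInf_lt hτ hU hy
      calc U i / v i ≤ (Measure.pi B).real {b | ∀ k ≠ i, b k ≤ x} := (div_le_iff₀' hvi).2 hxU
        _ ≤ (Measure.pi B).real (eval j ⁻¹' Iic y) :=
          measureReal_mono fun b hb => (hb j hji).trans hxy.le
        _ = (B j).real (Iic y) :=
          (measurePreserving_eval B j).measureReal_preimage measurableSet_Iic.nullMeasurableSet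
  exact (measureReal_ne_zero_iff).1 ((div_pos hU hvi).trans_le hc).ne'

theorem ae_winProb_eq_zero_of_le_essInf (hE : IsEquilibrium B τ v U) (hτ : IsTieBreakingRule τ)
    (hU : 0 < U i) (hji : j ≠ i) :
    ∀ᵐ y ∂B j, y ≤ essInf id (B i) → winProb B τ j y = 0 := by
  filter_upwards [ae_ae_update_of_ae (hE.ae_lt_of_ne_zero hτ hU hji) j] with y hy hyx
  rw [winProb_eq_zero_iff hτ]
  filter_upwards [hy, hE.ae_essInf_le_bid (i := i)] with b hb hbi
  by_contra hne
  have := hb hne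
  rw [update_of_ne hji.symm, update_self] at this
  linarith

theorem value_le_essInf (hE : IsEquilibrium B τ v U) (hτ : IsTieBreakingRule τ)
    (hU : 0 < U i) (hji : j ≠ i) : v j ≤ essInf id (B i) := by
  by_contra! hlow
  obtain ⟨y, hyx, ⟨-, hyU⟩, hyz⟩ := ((frequently_ae_iff.2
    (hE.measure_Iic_essInf_ne_zero hτ hU hji)).and_eventually
    ((hE.ae_payoff_eq j).and (hE.ae_winProb_eq_zero_of_le_essInf hτ hU hji))).exists
  rw [hyz hyx, mul_zero] at hyU
  linarith [hE.payoff_pos_of_essInf_lt hτ hU hji hlow]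

theorem ae_eq_zero_of_lt_value (hE : IsEquilibrium B τ v U) (hτ : IsTieBreakingRule τ)
    (hv : 0 ≤ v j) (hij : v j < v i) : ∀ᵐ b ∂Measure.pi B, τ b j = 0 := by
  have hji : j ≠ i := by rintro rfl; exact lt_irrefl _ hij
  have hover := hE.ae_eq_zero_of_value_lt_bid hτ hv
  rcases (hE.payoff_nonneg hτ (hv.trans hij.le)).eq_or_lt with hU | hU
  · have hnull : Measure.pi B {b | ∀ k ≠ i, b k ≤ v j} = 0 := by
      have := hE.payoff_ge_of_lt_value hτ hv hij
      rw [← hU] at this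
      refine (measureReal_eq_zero_iff).1 (le_antisymm ?_ measureReal_nonneg)
      nlinarith [measureReal_nonneg (μ := Measure.pi B) (s := {b | ∀ k ≠ i, b k ≤ v j})]
    filter_upwards [measure_eq_zero_iff_ae_notMem.1 hnull, hover] with b hb hbj
    by_contra hne
    exact hb fun k _ => (hτ.le_of_ne_zero hne k).trans (not_lt.1 (mt hbj hne))
  · have hx := hE.value_le_essInf hτ hU hji
    filter_upwards [hE.ae_lt_of_ne_zero hτ hU hji, hE.ae_essInf_le_bid (i := i), hover]
      with b hlt hlow hbj
    by_contra hne
    exact hne (hbj (hx.trans_lt (hlow.trans_lt (hlt hne))))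

end IsEquilibrium

theorem isEquilibrium_of_forall_integral_le {B : Fin n → Measure ℝ}
    [∀ i, IsProbabilityMeasure (B i)] {τ : (Fin n → ℝ) → Fin n → ℝ} {v : Fin n → ℝ}
    {u : Fin n → (Fin n → ℝ) → ℝ} (hu : ∀ i b, u i b = τ b i * (v i - b i))
    (hB : ∀ i, B i (Iio 0) = 0) (hInt : ∀ i, Integrable (u i) (Measure.pi B))
    (hNash : ∀ i a, 0 ≤ a →
      ∫ b, u i (update b i a) ∂Measure.pi B ≤ ∫ b, u i b ∂Measure.pi B) :
    IsEquilibrium B τ v fun i => ∫ b, u i b ∂Measure.pi B := by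
  have hdev : ∀ i x, ∫ b, u i (update b i x) ∂Measure.pi B = (v i - x) * winProb B τ i x := by
    intro i x
    simp only [hu, update_self]
    rw [integral_mul_const, mul_comm, winProb]
  refine ⟨fun i x hx => hdev i x ▸ hNash i x hx, fun i => ?_⟩
  have hpos : ∀ᵐ x ∂B i, 0 ≤ x :=
    (measure_eq_zero_iff_ae_notMem.1 (hB i)).mono fun _ h => not_lt.1 h
  have hslice := integral_eq_integral_integral_update (hInt i) i
  have hint := integrable_integral_update (hInt i) i
  simp only [hdev] at hslice hint
  have hae := (integral_eq_iff_of_ae_le hint (integrable_const _)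
    (hpos.mono fun x hx => hdev i x ▸ hNash i x hx)).1 (by simp [hslice])
  filter_upwards [hpos, hae] with x hx hxU using ⟨hx, hxU⟩

end FirstPriceAuction

open FirstPriceAuction

theorem stmt_6_general
    (n : ℕ) (hn : 0 < n)
    (v : Fin n → ℝ) (hv : ∀ i, 0 ≤ v i)
    -- the tie-breaking rule: a measurable probability vector supported on the highest bidders
    (τ : (Fin n → ℝ) → Fin n → ℝ)
    (hτ_meas : ∀ i, Measurable fun b => τ b i)
    (hτ_nonneg : ∀ b i, 0 ≤ τ b i)
    (hτ_sum : ∀ b, ∑ i, τ b i = 1)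
    (hτ_max : ∀ b i, (∃ k, b i < b k) → τ b i = 0)
    -- utilities
    (u : Fin n → (Fin n → ℝ) → ℝ)
    (hu : ∀ i b, u i b = τ b i * (v i - b i))
    -- the mixed strategy profile: independent bids, supported on `[0, ∞)`
    (B : Fin n → Measure ℝ)
    [∀ i, IsProbabilityMeasure (B i)]
    (hB_supp : ∀ i, B i (Set.Iio 0) = 0)
    -- all relevant expectations exist
    (hInt : ∀ i, Integrable (u i) (Measure.pi B))
    -- the Nash equilibrium condition
    (hNash : ∀ i (a : ℝ), 0 ≤ a →
      (∫ b, u i b ∂(Measure.pi B)) ≥ ∫ b, u i (Function.update b i a) ∂(Measure.pi B)) :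
    (∫ b, (∑ i, τ b i * v i) ∂(Measure.pi B)) = ⨆ i, v i := by
  have hτ : IsTieBreakingRule τ := ⟨hτ_meas, hτ_nonneg, hτ_sum, hτ_max⟩
  have hE := isEquilibrium_of_forall_integral_le hu hB_supp hInt hNash
  have : Nonempty (Fin n) := ⟨⟨0, hn⟩⟩
  obtain ⟨i, hi⟩ := Finite.exists_max v
  have hwelfare : ∀ᵐ b ∂Measure.pi B, ∑ k, τ b k * v k = v i := by
    have hterm : ∀ k, ∀ᵐ b ∂Measure.pi B, τ b k * v k = τ b k * v i := fun k =>
      (hi k).eq_or_lt.elim (fun h => ae_of_all _ fun b => by rw [h])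
        fun h => (hE.ae_eq_zero_of_lt_value hτ (hv k) h).mono fun b hb => by simp [hb]
    filter_upwards [ae_all_iff.2 hterm] with b hb
    rw [Finset.sum_congr rfl fun k _ => hb k, ← Finset.sum_mul, hτ_sum, one_mul]
  rw [integral_congr_ae hwelfare, integral_const, probReal_univ, one_smul]
  exact (le_antisymm (ciSup_le hi) (le_ciSup (Finite.bddAbove_range v) i)).symm

/-- Every mixed Nash equilibrium of a single-item first-price auction (any
valuations `vᵢ ≥ 0`, any tie-breaking rule) is fully efficient: the expected social welfare
equals `maxᵢ vᵢ`.  That is, the mixed price of anarchy of such auctions is `1`. -/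
theorem stmt_6
    (n : ℕ) (hn : 0 < n)
    (v : Fin n → ℝ) (hv : ∀ i, 0 ≤ v i)
    -- the tie-breaking rule: a measurable probability vector supported on the highest bidders
    (τ : (Fin n → ℝ) → Fin n → ℝ)
    (hτ_meas : ∀ i, Measurable fun b => τ b i)
    (hτ_nonneg : ∀ b i, 0 ≤ τ b i)
    (hτ_sum : ∀ b, ∑ i, τ b i = 1)
    (hτ_max : ∀ b i, (∃ k, b i < b k) → τ b i = 0)
    -- utilities
    (u : Fin n → (Fin n → ℝ) → ℝ)
    (hu : ∀ i b, u i b = τ b i * (v i - b i))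
    -- the mixed strategy profile: independent bids, supported on `[0, ∞)`
    (B : Fin n → Measure ℝ)
    [∀ i, IsProbabilityMeasure (B i)]
    (hB_supp : ∀ i, B i (Set.Iio 0) = 0)
    -- all relevant expectations exist
    (hInt : ∀ i, Integrable (u i) (Measure.pi B))
    (hIntDev : ∀ i (a : ℝ),
      Integrable (fun b => u i (Function.update b i a)) (Measure.pi B))
    -- the Nash equilibrium condition
    (hNash : ∀ i (a : ℝ), 0 ≤ a →
      (∫ b, u i b ∂(Measure.pi B)) ≥ ∫ b, u i (Function.update b i a) ∂(Measure.pi B)) :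
    (∫ b, (∑ i, τ b i * v i) ∂(Measure.pi B)) = ⨆ i, v i :=
  stmt_6_general n hn v hv τ hτ_meas hτ_nonneg hτ_sum hτ_max u hu B hB_supp hInt hNash
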